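/- For every θ ∈ (0,1] and every δ with 0 < δ < θ/2, the potential F_δ(r) = F_δ^log(r) + (1−r²)/2 satisfies assumptions (A1)-(A2) with q = 1: there exists β₀ ∈ ℝ with F_δ(r) ≥ β₀ for all r ∈ ℝ; F₁ := F_δ^log is twice continuously differentiable, nonnegative and convex; F₂(r) := (1−r²)/2 satisfies |F₂'(r)| = |r|; and there exist constants α > 0 and β ≥ 0 (depending on θ and δ) such that for all r ∈ ℝ: |φ_δ(r)| ≤ α·|r| + β, |φ_δ(r)| ≤ α·F_δ^log(r) + β, and |r·φ_δ(r)| ≤ α·F_δ^log(r) + β. -/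

import Mathlib

open Real Set

/-- The regularized logarithmic potential `F_δ^log` at temperature `θ`. -/
noncomputable def Flogδ (θ δ : ℝ) (r : ℝ) : ℝ :=
  if 1 - δ ≤ r then
    (θ/2) * ((1-r) * Real.log δ + (1+r) * Real.log (2-δ)
      + (1-r)^2/(2*δ) + (1+r)^2/(2*(2-δ)) - 1)
  else if r ≤ -(1-δ) then
    (θ/2) * ((1+r) * Real.log δ + (1-r) * Real.log (2-δ)
      + (1+r)^2/(2*δ) + (1-r)^2/(2*(2-δ)) - 1)
  else
    (θ/2) * ((1+r) * Real.log (1+r) + (1-r) * Real.log (1-r))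

/-!
On `[-(1-δ), 1-δ]` the potential `F_δ^log` is the logarithmic potential `F^log`, and its outer
branches are the second-order Taylor polynomials of `F^log` at `±(1-δ)`. Hence `F_δ^log` is `C²`
with second derivative `θ / (1 - c²)`, where `c` is the projection of `r` onto `[-(1-δ), 1-δ]`,
and this lies between `θ` and `κ = θ / (δ(2-δ))`. The lower bound gives convexity and, since
`F_δ^log(0) = φ_δ(0) = 0`, the estimate `θ r² / 2 ≤ F_δ^log(r)`; the upper bound makes `φ_δ`
`κ`-Lipschitz, so `|φ_δ(r)| ≤ κ |r|`. The growth estimates follow from these two bounds. Since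
`κ > θ / (2δ) > 1`, the Taylor branches outgrow `r² / 2`, which bounds `F_δ` from below.
-/

open Filter Topology

theorem hasDerivAt_of_eventuallyEq_nhdsLE_nhdsGE {f g h : ℝ → ℝ} {a d : ℝ}
    (hg : HasDerivAt g d a) (hh : HasDerivAt h d a)
    (hfg : f =ᶠ[𝓝[≤] a] g) (hfh : f =ᶠ[𝓝[≥] a] h) : HasDerivAt f d a := by
  rw [← hasDerivWithinAt_univ, ← Iic_union_Ici]
  exact (hg.hasDerivWithinAt.congr_of_eventuallyEq hfg (hfg.eq_of_nhdsWithin self_mem_Iic)).union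
    (hh.hasDerivWithinAt.congr_of_eventuallyEq hfh (hfh.eq_of_nhdsWithin self_mem_Ici))

theorem hasDerivAt_taylorPoly (p q s c x : ℝ) :
    HasDerivAt (fun r ↦ p + q * (r - c) + s / 2 * (r - c) ^ 2) (q + s * (x - c)) x := by
  have h : HasDerivAt (fun r ↦ p + q * (r - c) + s / 2 * (r - c) ^ 2)
      (q * 1 + s / 2 * (2 * (x - c) ^ 1 * 1)) x :=
    ((((hasDerivAt_id' x).sub_const c).const_mul q).const_add p).add
      ((((hasDerivAt_id' x).sub_const c).pow 2).const_mul (s / 2))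
  exact h.congr_deriv (by ring)

theorem monotoneOn_Ici_of_hasDerivAt_nonneg {f f' : ℝ → ℝ} {a : ℝ}
    (hf : ∀ x, a ≤ x → HasDerivAt f (f' x) x) (hf' : ∀ x, a ≤ x → 0 ≤ f' x) :
    MonotoneOn f (Ici a) :=
  monotoneOn_of_hasDerivWithinAt_nonneg (convex_Ici a)
    (fun x hx ↦ (hf x hx).continuousAt.continuousWithinAt)
    (fun x hx ↦ (hf x (interior_subset hx)).hasDerivWithinAt) fun x hx ↦ hf' x (interior_subset hx)

theorem taylorPoly_le_of_le_deriv2 {f f' f'' : ℝ → ℝ} {a c : ℝ}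
    (hf : ∀ x, a ≤ x → HasDerivAt f (f' x) x) (hf' : ∀ x, a ≤ x → HasDerivAt f' (f'' x) x)
    (hc : ∀ x, a ≤ x → c ≤ f'' x) {x : ℝ} (hx : a ≤ x) :
    f a + f' a * (x - a) + c / 2 * (x - a) ^ 2 ≤ f x := by
  have hslope : ∀ y, a ≤ y → 0 ≤ f' y - (f' a + c * (y - a)) := by
    have hd : ∀ y, a ≤ y → HasDerivAt (fun y ↦ f' y - (f' a + c * (y - a))) (f'' y - c) y :=
      fun y hy ↦ ((hf' y hy).sub
        ((((hasDerivAt_id' y).sub_const a).const_mul c).const_add _)).congr_deriv (by ring)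
    intro y hy
    simpa using monotoneOn_Ici_of_hasDerivAt_nonneg hd (fun y hy ↦ sub_nonneg.2 (hc y hy))
      self_mem_Ici hy hy
  have hd : ∀ y, a ≤ y → HasDerivAt (fun y ↦ f y - (f a + f' a * (y - a) + c / 2 * (y - a) ^ 2))
      (f' y - (f' a + c * (y - a))) y :=
    fun y hy ↦ (hf y hy).sub (hasDerivAt_taylorPoly _ _ _ _ _)
  simpa using monotoneOn_Ici_of_hasDerivAt_nonneg hd hslope self_mem_Ici hx hx

theorem exists_forall_le_mul_sq_sub_sq {κ : ℝ} (hκ : 1 < κ) (b : ℝ) :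
    ∃ m, ∀ x, m ≤ κ * (x - b) ^ 2 - x ^ 2 := by
  refine ⟨-(κ * b ^ 2 / (κ - 1)), fun x ↦ ?_⟩
  have hκ' : 0 < κ - 1 := by linarith
  have h : κ * (x - b) ^ 2 - x ^ 2 + κ * b ^ 2 / (κ - 1) = ((κ - 1) * x - κ * b) ^ 2 / (κ - 1) := by
    field_simp
    ring
  have : 0 ≤ ((κ - 1) * x - κ * b) ^ 2 / (κ - 1) := by positivity
  linarith

section TaylorExtend

variable {a b : ℝ} {g g' g'' : ℝ → ℝ}

noncomputable def taylorExtend (a b : ℝ) (g g' g'' : ℝ → ℝ) (r : ℝ) : ℝ :=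
  g (max a (min b r)) + g' (max a (min b r)) * (r - max a (min b r))
    + g'' (max a (min b r)) / 2 * (r - max a (min b r)) ^ 2

theorem taylorExtend_of_le (hab : a ≤ b) {r : ℝ} (hr : r ≤ a) :
    taylorExtend a b g g' g'' r = g a + g' a * (r - a) + g'' a / 2 * (r - a) ^ 2 := by
  rw [taylorExtend, min_eq_right (hr.trans hab), max_eq_left hr]

theorem taylorExtend_of_mem {r : ℝ} (hr : r ∈ Icc a b) : taylorExtend a b g g' g'' r = g r := by
  simp [taylorExtend, min_eq_right hr.2, max_eq_right hr.1]

theorem taylorExtend_of_ge (hab : a ≤ b) {r : ℝ} (hr : b ≤ r) :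
    taylorExtend a b g g' g'' r = g b + g' b * (r - b) + g'' b / 2 * (r - b) ^ 2 := by
  rw [taylorExtend, min_eq_left hr, max_eq_right hab]

theorem taylorExtend_zero_zero (r : ℝ) : taylorExtend a b g 0 0 r = g (max a (min b r)) := by
  simp [taylorExtend]

theorem hasDerivAt_taylorExtend (hab : a < b) (hg : ∀ x ∈ Icc a b, HasDerivAt g (g' x) x)
    (x : ℝ) : HasDerivAt (taylorExtend a b g g' g'') (taylorExtend a b g' g'' 0 x) x := by
  have hleft : ∀ x ≤ a, HasDerivAt (fun r ↦ g a + g' a * (r - a) + g'' a / 2 * (r - a) ^ 2)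
      (taylorExtend a b g' g'' 0 x) x := fun x hx ↦ by
    simpa [taylorExtend_of_le hab.le hx] using hasDerivAt_taylorPoly (g a) (g' a) (g'' a) a x
  have hright : ∀ x, b ≤ x → HasDerivAt (fun r ↦ g b + g' b * (r - b) + g'' b / 2 * (r - b) ^ 2)
      (taylorExtend a b g' g'' 0 x) x := fun x hx ↦ by
    simpa [taylorExtend_of_ge hab.le hx] using hasDerivAt_taylorPoly (g b) (g' b) (g'' b) b x
  have hmid : ∀ x ∈ Icc a b, HasDerivAt g (taylorExtend a b g' g'' 0 x) x := fun x hx ↦ by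
    rw [taylorExtend_of_mem hx]; exact hg x hx
  rcases lt_or_ge x a with hxa | hax
  · exact (hleft x hxa.le).congr_of_eventuallyEq
      (eventually_of_mem (Iio_mem_nhds hxa) fun r hr ↦ taylorExtend_of_le hab.le (le_of_lt hr))
  rcases hax.eq_or_lt with rfl | hax
  · exact hasDerivAt_of_eventuallyEq_nhdsLE_nhdsGE (hleft a le_rfl) (hmid a ⟨le_rfl, hab.le⟩)
      (eventually_nhdsWithin_of_forall fun r hr ↦ taylorExtend_of_le hab.le hr)
      (eventually_of_mem (Icc_mem_nhdsGE hab) fun r hr ↦ taylorExtend_of_mem hr)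
  rcases lt_or_ge x b with hxb | hbx
  · exact (hmid x ⟨hax.le, hxb.le⟩).congr_of_eventuallyEq
      (eventually_of_mem (Ioo_mem_nhds hax hxb) fun r hr ↦
        taylorExtend_of_mem (Ioo_subset_Icc_self hr))
  rcases hbx.eq_or_lt with rfl | hbx
  · exact hasDerivAt_of_eventuallyEq_nhdsLE_nhdsGE (hmid b ⟨hab.le, le_rfl⟩) (hright b le_rfl)
      (eventually_of_mem (Icc_mem_nhdsLE hab) fun r hr ↦ taylorExtend_of_mem hr)
      (eventually_nhdsWithin_of_forall fun r hr ↦ taylorExtend_of_ge hab.le hr)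
  · exact (hright x hbx.le).congr_of_eventuallyEq
      (eventually_of_mem (Ioi_mem_nhds hbx) fun r hr ↦ taylorExtend_of_ge hab.le (le_of_lt hr))

theorem contDiff_two_taylorExtend (hab : a < b) (hg : ∀ x ∈ Icc a b, HasDerivAt g (g' x) x)
    (hg' : ∀ x ∈ Icc a b, HasDerivAt g' (g'' x) x) (hg'' : ContinuousOn g'' (Icc a b)) :
    ContDiff ℝ 2 (taylorExtend a b g g' g'') := by
  have hd : deriv (taylorExtend a b g g' g'') = taylorExtend a b g' g'' 0 :=
    funext fun x ↦ (hasDerivAt_taylorExtend hab hg x).deriv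
  have hd' : deriv (taylorExtend a b g' g'' 0) = taylorExtend a b g'' 0 0 :=
    funext fun x ↦ (hasDerivAt_taylorExtend hab hg' x).deriv
  rw [show (2 : WithTop ℕ∞) = 1 + 1 from rfl, contDiff_succ_iff_deriv, hd, contDiff_one_iff_deriv,
    hd', funext taylorExtend_zero_zero]
  exact ⟨fun x ↦ (hasDerivAt_taylorExtend hab hg x).differentiableAt, by simp,
    fun x ↦ (hasDerivAt_taylorExtend hab hg' x).differentiableAt,
    hg''.comp_continuous (by fun_prop) fun x ↦ ⟨le_max_left _ _, max_le hab.le (min_le_left _ _)⟩⟩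

end TaylorExtend

section Flog

variable (θ : ℝ) {r : ℝ}

noncomputable def Flog (r : ℝ) : ℝ := θ / 2 * ((1 + r) * log (1 + r) + (1 - r) * log (1 - r))

noncomputable def Flog' (r : ℝ) : ℝ := θ / 2 * (log (1 + r) - log (1 - r))

noncomputable def Flog'' (r : ℝ) : ℝ := θ / (1 - r ^ 2)

theorem hasDerivAt_Flog (hr : r ∈ Ioo (-1) 1) : HasDerivAt (Flog θ) (Flog' θ r) r := by
  have h1 : 1 + r ≠ 0 := by linarith [hr.1]
  have h2 : 1 - r ≠ 0 := by linarith [hr.2]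
  have hplus := ((hasDerivAt_id' r).const_add 1).mul ((hasDerivAt_id' r).const_add 1 |>.log h1)
  have hminus := ((hasDerivAt_id' r).const_sub 1).mul ((hasDerivAt_id' r).const_sub 1 |>.log h2)
  refine ((hplus.add hminus).const_mul (θ / 2)).congr_deriv ?_
  rw [Flog']
  field_simp
  ring

theorem hasDerivAt_Flog' (hr : r ∈ Ioo (-1) 1) : HasDerivAt (Flog' θ) (Flog'' θ r) r := by
  have h1 : 1 + r ≠ 0 := by linarith [hr.1]
  have h2 : 1 - r ≠ 0 := by linarith [hr.2]
  refine ((((hasDerivAt_id' r).const_add 1).log h1).sub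
    (((hasDerivAt_id' r).const_sub 1).log h2) |>.const_mul (θ / 2)).congr_deriv ?_
  rw [Flog'', show 1 - r ^ 2 = (1 + r) * (1 - r) by ring]
  field_simp
  ring

theorem continuousOn_Flog'' : ContinuousOn (Flog'' θ) (Ioo (-1) 1) :=
  continuousOn_const.div (by fun_prop) fun r hr ↦ by nlinarith [hr.1, hr.2]

theorem Flog'_nonneg (hθ : 0 ≤ θ) (hr : r ∈ Ico 0 1) : 0 ≤ Flog' θ r :=
  mul_nonneg (by positivity) (sub_nonneg.2 (log_le_log (by linarith [hr.2]) (by linarith [hr.1])))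

end Flog

section Flogδ

variable {θ δ : ℝ}

theorem Flogδ_eq_taylorExtend (hδ : 0 < δ) (hδ1 : δ < 1) :
    Flogδ θ δ = taylorExtend (-(1 - δ)) (1 - δ) (Flog θ) (Flog' θ) (Flog'' θ) := by
  have h2δ : 2 - δ ≠ 0 := by linarith
  have hdenom : 1 - (1 - δ) ^ 2 = δ * (2 - δ) := by ring
  funext r
  unfold Flogδ
  split_ifs with hr hr'
  · rw [taylorExtend_of_ge (by linarith) hr, Flog, Flog', Flog'', hdenom,
      show 1 + (1 - δ) = 2 - δ by ring, show 1 - (1 - δ) = δ by ring]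
    field_simp
    ring
  · rw [taylorExtend_of_le (by linarith) hr', Flog, Flog', Flog'', neg_sq, hdenom,
      show 1 + -(1 - δ) = δ by ring, show 1 - -(1 - δ) = 2 - δ by ring]
    field_simp
    ring
  · rw [taylorExtend_of_mem ⟨by linarith, by linarith⟩, Flog]

theorem Flogδ_neg (hδ1 : δ < 1) (r : ℝ) : Flogδ θ δ (-r) = Flogδ θ δ r := by
  unfold Flogδ
  split_ifs <;> first | linarith | ring_nf

noncomputable def phiδ (θ δ : ℝ) : ℝ → ℝ := taylorExtend (-(1 - δ)) (1 - δ) (Flog' θ) (Flog'' θ) 0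

noncomputable def phiδ' (θ δ : ℝ) : ℝ → ℝ := taylorExtend (-(1 - δ)) (1 - δ) (Flog'' θ) 0 0

theorem hasDerivAt_Flogδ (hδ : 0 < δ) (hδ1 : δ < 1) (x : ℝ) :
    HasDerivAt (Flogδ θ δ) (phiδ θ δ x) x := by
  rw [Flogδ_eq_taylorExtend hδ hδ1]
  exact hasDerivAt_taylorExtend (by linarith)
    (fun y hy ↦ hasDerivAt_Flog θ (Icc_subset_Ioo (by linarith) (by linarith) hy)) x

theorem hasDerivAt_phiδ (hδ : 0 < δ) (hδ1 : δ < 1) (x : ℝ) :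
    HasDerivAt (phiδ θ δ) (phiδ' θ δ x) x :=
  hasDerivAt_taylorExtend (by linarith)
    (fun y hy ↦ hasDerivAt_Flog' θ (Icc_subset_Ioo (by linarith) (by linarith) hy)) x

theorem contDiff_Flogδ (hδ : 0 < δ) (hδ1 : δ < 1) : ContDiff ℝ 2 (Flogδ θ δ) := by
  have hsub : Icc (-(1 - δ)) (1 - δ) ⊆ Ioo (-1) 1 := Icc_subset_Ioo (by linarith) (by linarith)
  rw [Flogδ_eq_taylorExtend hδ hδ1]
  exact contDiff_two_taylorExtend (by linarith) (fun y hy ↦ hasDerivAt_Flog θ (hsub hy))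
    (fun y hy ↦ hasDerivAt_Flog' θ (hsub hy)) ((continuousOn_Flog'' θ).mono hsub)

theorem Flogδ_zero (hδ1 : δ < 1) : Flogδ θ δ 0 = 0 := by
  rw [Flogδ, if_neg (by linarith), if_neg (by linarith)]
  simp

theorem phiδ_zero (hδ1 : δ < 1) : phiδ θ δ 0 = 0 := by
  rw [phiδ, taylorExtend_of_mem ⟨by linarith, by linarith⟩]
  simp [Flog']

theorem phiδ'_mem_Icc (hδ : 0 < δ) (hδ1 : δ < 1) (hθ : 0 ≤ θ) (x : ℝ) :
    phiδ' θ δ x ∈ Icc θ (θ / (δ * (2 - δ))) := by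
  rw [phiδ', taylorExtend_zero_zero, Flog'']
  set c := max (-(1 - δ)) (min (1 - δ) x)
  have hc : c ^ 2 ≤ (1 - δ) ^ 2 :=
    sq_le_sq' (le_max_left _ _) (max_le (by linarith) (min_le_left _ _))
  have hpos : 0 < 1 - c ^ 2 := by nlinarith
  constructor
  · rw [le_div_iff₀ hpos]
    nlinarith [sq_nonneg c]
  · exact div_le_div_of_nonneg_left hθ (by nlinarith) (by nlinarith)

theorem convexOn_Flogδ (hδ : 0 < δ) (hδ1 : δ < 1) (hθ : 0 ≤ θ) : ConvexOn ℝ univ (Flogδ θ δ) :=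
  convexOn_of_hasDerivWithinAt2_nonneg convex_univ (contDiff_Flogδ hδ hδ1).continuous.continuousOn
    (fun x _ ↦ (hasDerivAt_Flogδ hδ hδ1 x).hasDerivWithinAt)
    (fun x _ ↦ (hasDerivAt_phiδ hδ hδ1 x).hasDerivWithinAt)
    fun x _ ↦ hθ.trans (phiδ'_mem_Icc hδ hδ1 hθ x).1

theorem mul_sq_le_Flogδ (hδ : 0 < δ) (hδ1 : δ < 1) (hθ : 0 ≤ θ) (x : ℝ) :
    θ / 2 * x ^ 2 ≤ Flogδ θ δ x := by
  wlog hx : 0 ≤ x generalizing x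
  · simpa [Flogδ_neg hδ1] using this (-x) (by linarith)
  simpa [Flogδ_zero hδ1, phiδ_zero hδ1] using
    taylorPoly_le_of_le_deriv2 (fun y _ ↦ hasDerivAt_Flogδ hδ hδ1 y)
      (fun y _ ↦ hasDerivAt_phiδ hδ hδ1 y) (fun y _ ↦ (phiδ'_mem_Icc hδ hδ1 hθ y).1) hx

theorem abs_phiδ_le (hδ : 0 < δ) (hδ1 : δ < 1) (hθ : 0 ≤ θ) (x : ℝ) :
    |phiδ θ δ x| ≤ θ / (δ * (2 - δ)) * |x| := by
  simpa [phiδ_zero hδ1] using Convex.norm_image_sub_le_of_norm_hasDerivWithin_le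
    (fun y _ ↦ (hasDerivAt_phiδ hδ hδ1 y).hasDerivWithinAt)
    (fun y _ ↦ by
      have hy := phiδ'_mem_Icc hδ hδ1 hθ y
      rw [Real.norm_eq_abs, abs_of_nonneg (hθ.trans hy.1)]
      exact hy.2)
    convex_univ (mem_univ 0) (mem_univ x)

theorem Flogδ_nonneg (hδ : 0 < δ) (hδ1 : δ < 1) (hθ : 0 ≤ θ) (x : ℝ) : 0 ≤ Flogδ θ δ x :=
  (by positivity : 0 ≤ θ / 2 * x ^ 2).trans (mul_sq_le_Flogδ hδ hδ1 hθ x)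

theorem phiδ_growth (hδ : 0 < δ) (hδ1 : δ < 1) (hθ : 0 < θ) (hθ2 : θ ≤ 2) (r : ℝ) :
    |phiδ θ δ r| ≤ 2 / (δ * (2 - δ)) * |r| + θ / (δ * (2 - δ)) ∧
    |phiδ θ δ r| ≤ 2 / (δ * (2 - δ)) * Flogδ θ δ r + θ / (δ * (2 - δ)) ∧
    |r * phiδ θ δ r| ≤ 2 / (δ * (2 - δ)) * Flogδ θ δ r + θ / (δ * (2 - δ)) := by
  have hδ2 : 0 < δ * (2 - δ) := by nlinarith
  set κ := θ / (δ * (2 - δ))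
  set α := 2 / (δ * (2 - δ))
  have hκ : 0 ≤ κ := by positivity
  have hκα : κ ≤ α := div_le_div_of_nonneg_right hθ2 hδ2.le
  have hφ : |phiδ θ δ r| ≤ κ * |r| := abs_phiδ_le hδ hδ1 hθ.le r
  have hκF : κ * r ^ 2 ≤ α * Flogδ θ δ r :=
    calc κ * r ^ 2 = α * (θ / 2 * r ^ 2) := by ring
      _ ≤ _ := mul_le_mul_of_nonneg_left (mul_sq_le_Flogδ hδ hδ1 hθ.le r) (by positivity)
  have hr : |r| ≤ r ^ 2 + 1 := by nlinarith [abs_nonneg r, sq_abs r]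
  rw [abs_mul]
  refine ⟨?_, ?_, ?_⟩
  · nlinarith [mul_le_mul_of_nonneg_right hκα (abs_nonneg r)]
  · nlinarith [mul_le_mul_of_nonneg_left hr hκ]
  · nlinarith [mul_le_mul_of_nonneg_left hφ (abs_nonneg r), sq_abs r]

theorem exists_le_Flogδ_add (hδ : 0 < δ) (hδ1 : δ < 1) (hδθ : δ < θ / 2) :
    ∃ β₀ : ℝ, ∀ r : ℝ, β₀ ≤ Flogδ θ δ r + (1 - r ^ 2) / 2 := by
  have hθ : 0 ≤ θ := by linarith
  have hκ : 1 < Flog'' θ (1 - δ) := by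
    rw [Flog'', one_lt_div (by nlinarith)]
    nlinarith
  obtain ⟨m, hm⟩ := exists_forall_le_mul_sq_sub_sq hκ (1 - δ)
  refine ⟨min 0 ((m + 1) / 2), fun r ↦ ?_⟩
  wlog hr : 0 ≤ r generalizing r
  · simpa [Flogδ_neg hδ1] using this (-r) (by linarith)
  have hF := mul_sq_le_Flogδ hδ hδ1 hθ r
  rcases le_or_gt r (1 - δ) with hrb | hbr
  · have : 0 ≤ θ / 2 * r ^ 2 := by positivity
    nlinarith [min_le_left 0 ((m + 1) / 2)]
  · have hFb := mul_sq_le_Flogδ hδ hδ1 hθ (1 - δ)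
    rw [Flogδ_eq_taylorExtend hδ hδ1, taylorExtend_of_mem ⟨by linarith, le_rfl⟩] at hFb
    have hF'b := Flog'_nonneg θ (r := 1 - δ) hθ ⟨by linarith, by linarith⟩
    rw [Flogδ_eq_taylorExtend hδ hδ1, taylorExtend_of_ge (by linarith) hbr.le]
    nlinarith [hm r, mul_nonneg hF'b (sub_nonneg.2 hbr.le), min_le_right 0 ((m + 1) / 2),
      mul_nonneg hθ (sq_nonneg (1 - δ))]

end Flogδ

/-- For `θ ∈ (0,1]` and `0 < δ < θ/2`, `F_δ(r) = F_δ^log(r) + (1−r²)/2` satisfies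
assumptions (A1)–(A2) with `q = 1`: a lower bound `β₀`; `F₁ = F_δ^log` is `C²`,
nonnegative and convex; `F₂(r) = (1−r²)/2` satisfies `|F₂'(r)| = |r|`; and
`φ_δ = (F_δ^log)'` satisfies the linear growth estimates with constants depending
on `θ` and `δ`. -/
theorem Flogδ_satisfies_assumptions
    (θ δ : ℝ) (hθ : θ ∈ Set.Ioc (0:ℝ) 1) (hδ : 0 < δ) (hδθ : δ < θ/2) :
    (∃ β₀ : ℝ, ∀ r : ℝ, β₀ ≤ Flogδ θ δ r + (1 - r^2)/2) ∧
    ContDiff ℝ 2 (Flogδ θ δ) ∧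
    (∀ r : ℝ, 0 ≤ Flogδ θ δ r) ∧
    ConvexOn ℝ Set.univ (Flogδ θ δ) ∧
    (∀ r : ℝ, |deriv (fun s : ℝ => (1 - s^2)/2) r| = |r|) ∧
    (∃ α > (0:ℝ), ∃ β ≥ (0:ℝ), ∀ r : ℝ,
      |deriv (Flogδ θ δ) r| ≤ α * |r| + β ∧
      |deriv (Flogδ θ δ) r| ≤ α * Flogδ θ δ r + β ∧
      |r * deriv (Flogδ θ δ) r| ≤ α * Flogδ θ δ r + β) := by
  obtain ⟨hθ, hθ1⟩ := hθ
  have hδ1 : δ < 1 := by linarith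
  have hδ2 : 0 < δ * (2 - δ) := by nlinarith
  have hderiv : deriv (Flogδ θ δ) = phiδ θ δ :=
    funext fun r ↦ (hasDerivAt_Flogδ hδ hδ1 r).deriv
  refine ⟨exists_le_Flogδ_add hδ hδ1 hδθ, contDiff_Flogδ hδ hδ1, Flogδ_nonneg hδ hδ1 hθ.le,
    convexOn_Flogδ hδ hδ1 hθ.le, fun r ↦ ?_, 2 / (δ * (2 - δ)), by positivity,
    θ / (δ * (2 - δ)), by positivity, fun r ↦ ?_⟩
  · rw [(((hasDerivAt_pow 2 r).const_sub 1).div_const 2).deriv]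
    simp [neg_div]
  · rw [hderiv]
    exact phiδ_growth hδ hδ1 hθ (by linarith) r
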